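/- arXiv:1110.3699 — 5 statements merged into one kernel-verified Lean document; each statement's English description precedes it below -/
import Mathlib

section
/- Let L be a finite-dimensional solvable Lie algebra, A a minimal ideal of L, and M, K two complements to A in L. Then M and K are conjugate under the group I(L:A) of automorphisms generated by exp(ad a), a ∈ A, if and only if M ∩ C_L(A) = K ∩ C_L(A). -/
/-!
As `L` is solvable and `A` is a minimal ideal, `A` is abelian. Then, for a complement `K`, the
projection `π_K : L → A` along `K` is a derivation of `L` into the irreducible `L`-module `A`, and
for two complements the derivation `D = π_K - π_M` satisfies:
`K = (1 + ad v) M` iff `D = ⁅·, v⁆` is inner, and `D` vanishes on `C_L(A)` iff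
`M ∩ C_L(A) = K ∩ C_L(A)`. Products of maps `1 + ad a` with `a ∈ A` collapse to `1 + ad (∑ a)`,
and inner derivations vanish on `C_L(A)`.

It remains to see that a derivation `D` of a solvable Lie algebra into a finite-dimensional
irreducible module that vanishes on the kernel of the action is inner. The derived series gives
an ideal `I` that acts nontrivially while `⁅I, I⁆` acts trivially. The generalised kernel of any
`x ∈ I` is a submodule, so `x` acts injectively or nilpotently, and by Engel's theorem not all of
`I` acts nilpotently. Pick `x₀ ∈ I` acting bijectively and `v` with `x₀ • v = D x₀`; then
`E = D - ⁅·, v⁆` kills `x₀`, and `E ⁅x, x₀⁆ = -x₀ • E x` shows that `E` vanishes on `x` once it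
vanishes on `⁅x, x₀⁆`: first for `x ∈ I` (as `⁅I, x₀⁆` acts trivially), then for all `x`.
-/

open LieModule LieAlgebra

theorem Module.End.pow_succ_apply_eq_zero_of_commute_lie {R V : Type*} [CommRing R]
    [AddCommGroup V] [Module R V] {f g : Module.End R V} (hfg : Commute f ⁅f, g⁆) {v : V}
    {k : ℕ} (hv : (f ^ k) v = 0) : (f ^ (k + 1)) (g v) = 0 := by
  induction k generalizing v with
  | zero => simp_all
  | succ k ih =>
    have hfv : (f ^ k) (f v) = 0 := by rwa [← Module.End.mul_apply, ← pow_succ]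
    have hfg_apply : f (g v) = g (f v) + ⁅f, g⁆ v := by
      rw [Ring.lie_def, LinearMap.sub_apply, Module.End.mul_apply, Module.End.mul_apply]
      abel
    rw [pow_succ, Module.End.mul_apply, hfg_apply, map_add, ih hfv, zero_add,
      ← Module.End.mul_apply, (hfg.pow_left (k + 1)).eq, Module.End.mul_apply, hv, map_zero]

namespace Submodule

variable {R E : Type*} [Ring R] [AddCommGroup E] [Module R E] {p q : Submodule R E}

lemma isCompl_of_forall_exists_add (h₁ : ∀ x, ∃ a ∈ p, ∃ b ∈ q, x = a + b)
    (h₂ : ∀ x, x ∈ p → x ∈ q → x = 0) : IsCompl p q := by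
  refine ⟨disjoint_def.mpr h₂, codisjoint_iff_exists_add_eq.mpr fun x ↦ ?_⟩
  obtain ⟨a, ha, b, hb, rfl⟩ := h₁ x
  exact ⟨a, b, ha, hb, rfl⟩

lemma projection_apply_eq_iff_sub_mem (h : IsCompl p q) {x a : E} (ha : a ∈ p) :
    p.projection q h x = a ↔ x - a ∈ q := by
  rw [← projection_apply_eq_zero_iff h, map_sub, projection_apply_of_mem_left h ha, sub_eq_zero]

end Submodule

namespace LieSubmodule

variable {R L M : Type*} [CommRing R] [LieRing L] [AddCommGroup M] [Module R M]
  [LieRingModule L M]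

lemma isIrreducible_of_isAtom {N : LieSubmodule R L M} (hN : IsAtom N) :
    IsIrreducible R L N := by
  have : Nontrivial N := (nontrivial_iff_ne_bot R L M).mpr hN.1
  refine IsIrreducible.mk fun N' hN' ↦
    map_injective_of_injective (f := N.incl) Subtype.coe_injective ?_
  rw [map_incl_top]
  refine (hN.le_iff.mp map_incl_le).resolve_left fun h ↦ hN' ?_
  exact map_injective_of_injective (f := N.incl) Subtype.coe_injective (by rw [h, map_bot])

lemma mem_ker_iff_forall_lie_eq_zero [LieAlgebra R L] [LieModule R L M] {N : LieSubmodule R L M}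
    {x : L} : x ∈ LieModule.ker R L N ↔ ∀ m ∈ N, ⁅x, m⁆ = 0 := by
  simp [LieModule.mem_ker, Subtype.ext_iff]

end LieSubmodule

namespace LieModule

variable {F L V : Type*} [Field F] [LieRing L] [LieAlgebra F L]
  [AddCommGroup V] [Module F V] [LieRingModule L V] [LieModule F L V]

lemma toEnd_apply_lie (x y : L) : toEnd F L V ⁅x, y⁆ = ⁅toEnd F L V x, toEnd F L V y⁆ := by
  ext v
  simp [Ring.lie_def]

lemma le_ker_of_forall_isNilpotent [IsIrreducible F L V] [FiniteDimensional F V]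
    {I : LieIdeal F L} (h : ∀ x ∈ I, _root_.IsNilpotent (toEnd F L V x)) :
    I ≤ LieModule.ker F L V := by
  have : Nontrivial V := nontrivial_of_isIrreducible F L V
  have : IsNilpotent I V := isNilpotent_iff_forall'.mpr fun x ↦ h x x.2
  have := nontrivial_max_triv_of_isNilpotent F I V
  obtain ⟨⟨v, hv⟩, hv0⟩ := exists_ne (0 : maxTrivSubmodule F I V)
  let W : LieSubmodule F L V :=
    { carrier := {w | ∀ x ∈ I, ⁅x, w⁆ = 0}
      add_mem' := fun hu hw x hx ↦ by rw [lie_add, hu x hx, hw x hx, add_zero]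
      zero_mem' := fun x _ ↦ lie_zero x
      smul_mem' := fun c w hw x hx ↦ by rw [lie_smul, hw x hx, smul_zero]
      lie_mem := fun {y w} hw x hx ↦ by
        rw [leibniz_lie, hw x hx, lie_zero, add_zero, hw _ (lie_mem_left F L I x y hx)] }
  have hvW : v ∈ W := fun x hx ↦ by simpa using hv ⟨x, hx⟩
  have hW : W = ⊤ := (eq_bot_or_eq_top W).resolve_left fun hbot ↦ hv0 (by
    rw [hbot] at hvW
    simpa using hvW)
  exact fun x hx ↦ (LieModule.mem_ker F L V x).mpr fun w ↦
    (hW ▸ LieSubmodule.mem_top w : w ∈ W) x hx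

section

variable {I : LieIdeal F L} (hI : ⁅I, I⁆ ≤ LieModule.ker F L V)
include hI

lemma commute_toEnd_of_mem {x y : L} (hx : x ∈ I) (hy : y ∈ I) :
    Commute (toEnd F L V x) (toEnd F L V y) := by
  rw [commute_iff_lie_eq, ← toEnd_apply_lie]
  exact hI (LieSubmodule.lie_mem_lie hx hy)

variable [IsIrreducible F L V] [FiniteDimensional F V]

lemma injective_or_isNilpotent_toEnd {x : L} (hx : x ∈ I) :
    Function.Injective (toEnd F L V x) ∨ _root_.IsNilpotent (toEnd F L V x) := by
  set f := toEnd F L V x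
  let W : LieSubmodule F L V :=
    { f.maxGenEigenspace 0 with
      lie_mem := fun {y v} hv ↦ by
        obtain ⟨k, hk⟩ := (f.mem_maxGenEigenspace 0 v).mp hv
        refine (f.mem_maxGenEigenspace 0 _).mpr ⟨k + 1, ?_⟩
        rw [zero_smul, sub_zero] at hk ⊢
        rw [← toEnd_apply_apply F]
        refine Module.End.pow_succ_apply_eq_zero_of_commute_lie ?_ hk
        rw [← toEnd_apply_lie]
        exact commute_toEnd_of_mem hI hx (lie_mem_left F L I x y hx) }
  have hW : ∀ v, v ∈ W ↔ ∃ k, (f ^ k) v = 0 := fun v ↦ by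
    change v ∈ f.maxGenEigenspace 0 ↔ _
    simp
  rcases eq_bot_or_eq_top W with h | h
  · refine Or.inl (LinearMap.ker_eq_bot.mp (eq_bot_iff.mpr fun v hv ↦ ?_))
    have : v ∈ W := (hW v).mpr ⟨1, by simpa using hv⟩
    simpa [h] using this
  · exact Or.inr (Module.End.isNilpotent_iff_of_finite.mpr fun v ↦
      (hW v).mp (h ▸ LieSubmodule.mem_top v))

lemma exists_injective_toEnd_of_not_le_ker (hI' : ¬ I ≤ LieModule.ker F L V) :
    ∃ x ∈ I, Function.Injective (toEnd F L V x) := by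
  by_contra! h
  exact hI' (le_ker_of_forall_isNilpotent fun x hx ↦
    (injective_or_isNilpotent_toEnd hI hx).resolve_left (h x hx))

end

lemma exists_lieIdeal_not_le_ker_lie_le_ker [IsSolvable L] (h : LieModule.ker F L V ≠ ⊤) :
    ∃ I : LieIdeal F L, ¬ I ≤ LieModule.ker F L V ∧ ⁅I, I⁆ ≤ LieModule.ker F L V := by
  obtain ⟨k, hk⟩ := IsSolvable.solvable (R := F) (L := L)
  obtain ⟨j, hj, hj'⟩ := Nat.exists_not_and_succ_of_not_zero_of_exists
    (p := fun j ↦ derivedSeries F L j ≤ LieModule.ker F L V) (by simpa [top_le_iff] using h)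
    ⟨k, hk ▸ bot_le⟩
  exact ⟨derivedSeries F L j, hj, (derivedSeriesOfIdeal_succ F L ⊤ j).symm.le.trans hj'⟩

end LieModule

namespace LieDerivation

variable {F L V : Type*} [Field F] [LieRing L] [LieAlgebra F L]
  [AddCommGroup V] [Module F V] [LieRingModule L V] [LieModule F L V]

lemma eq_zero_of_apply_lie_eq_zero (D : LieDerivation F L V) {x₀ : L}
    (hx₀ : Function.Injective (toEnd F L V x₀)) (hD : D x₀ = 0) {x : L} (h : D ⁅x, x₀⁆ = 0) :
    D x = 0 := by
  rw [apply_lie_eq_sub, hD, lie_zero, zero_sub, neg_eq_zero, ← toEnd_apply_apply F] at h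
  exact hx₀ (h.trans (map_zero _).symm)

theorem exists_eq_inner_of_forall_mem_ker [IsSolvable L] [IsIrreducible F L V]
    [FiniteDimensional F V] (D : LieDerivation F L V)
    (hD : ∀ x ∈ LieModule.ker F L V, D x = 0) : ∃ v, inner F L V v = D := by
  by_cases hker : LieModule.ker F L V = ⊤
  · exact ⟨0, by ext x; simp [hD x (hker ▸ LieSubmodule.mem_top x)]⟩
  obtain ⟨I, hIk, hII⟩ := exists_lieIdeal_not_le_ker_lie_le_ker hker
  obtain ⟨x₀, hx₀I, hx₀⟩ := exists_injective_toEnd_of_not_le_ker hII hIk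
  obtain ⟨v, hv⟩ := LinearMap.injective_iff_surjective.mp hx₀ (D x₀)
  set E := D - inner F L V v
  have hE₀ : E x₀ = 0 := by simp [E, ← hv]
  have hEker : ∀ x ∈ LieModule.ker F L V, E x = 0 := fun x hx ↦ by
    simp [E, hD x hx, (LieModule.mem_ker F L V x).mp hx v]
  have hEI : ∀ x ∈ I, E x = 0 := fun x hx ↦
    E.eq_zero_of_apply_lie_eq_zero hx₀ hE₀ (hEker _ (hII (LieSubmodule.lie_mem_lie hx hx₀I)))
  refine ⟨v, (sub_eq_zero.mp ?_).symm⟩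
  ext x
  exact E.eq_zero_of_apply_lie_eq_zero hx₀ hE₀ (hEI _ (lie_mem_right F L I x x₀ hx₀I))

end LieDerivation

namespace LieIdeal

variable {R L : Type*} [CommRing R] [LieRing L] [LieAlgebra R L] {A : LieIdeal R L}

lemma lie_self_eq_bot_of_isAtom [IsSolvable L] (hA : IsAtom A) : ⁅A, A⁆ = ⊥ := by
  refine (hA.le_iff.mp (LieSubmodule.lie_le_right A A)).resolve_right fun hAA ↦ hA.1 ?_
  obtain ⟨k, hk⟩ := IsSolvable.solvable (R := R) (L := L)
  have hD : ∀ j, derivedSeriesOfIdeal R L j A = A := fun j ↦ by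
    induction j with
    | zero => rfl
    | succ j ih => rw [derivedSeriesOfIdeal_succ, ih, hAA]
  rw [← hD k, ← le_bot_iff, ← hk]
  exact derivedSeriesOfIdeal_mono le_top k

lemma ad_mul_ad_eq_zero (hA : ⁅A, A⁆ = ⊥) {a b : L} (ha : a ∈ A) (hb : b ∈ A) :
    ad R L a * ad R L b = 0 := by
  ext x
  exact (LieSubmodule.lie_eq_bot_iff A A).mp hA a ha _ (lie_mem_left R L A b x hb)

lemma list_prod_map_one_add_ad (hA : ⁅A, A⁆ = ⊥) {l : List L} (hl : ∀ a ∈ l, a ∈ A) :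
    (l.map fun a ↦ 1 + ad R L a).prod = 1 + ad R L l.sum := by
  induction l with
  | nil => simp
  | cons a l ih =>
    have hl' : ∀ b ∈ l, b ∈ A := fun b hb ↦ hl b (List.mem_cons_of_mem a hb)
    rw [List.map_cons, List.prod_cons, ih hl', List.sum_cons, map_add, add_mul, one_mul, mul_add,
      mul_one, ad_mul_ad_eq_zero hA (hl a List.mem_cons_self) (list_sum_mem hl'), add_zero]
    abel

lemma exists_list_iff_exists_mem (hA : ⁅A, A⁆ = ⊥) (S T : Set L) :
    (∃ l : List L, (∀ a ∈ l, a ∈ A) ∧ S = ⇑((l.map fun a ↦ 1 + ad R L a).prod) '' T) ↔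
      ∃ v ∈ A, S = ⇑(1 + ad R L v) '' T := by
  constructor
  · rintro ⟨l, hl, rfl⟩
    exact ⟨l.sum, list_sum_mem hl, by rw [list_prod_map_one_add_ad hA hl]⟩
  · rintro ⟨v, hv, rfl⟩
    exact ⟨[v], by simpa using hv, by simp⟩

lemma image_one_add_ad_eq_of_mapsTo {M K : LieSubalgebra R L}
    (hM : Codisjoint A.toSubmodule M.toSubmodule) (hK : Disjoint A.toSubmodule K.toSubmodule)
    {v : L} (hv : v ∈ A) (h : Set.MapsTo ⇑(1 + ad R L v) M K) : ⇑(1 + ad R L v) '' M = K := by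
  refine (Set.image_subset_iff.mpr h).antisymm fun z hz ↦ ?_
  obtain ⟨a, m, ha, hm, rfl⟩ := Submodule.codisjoint_iff_exists_add_eq.mp hM z
  refine ⟨m, hm, sub_eq_zero.mp (Submodule.disjoint_def.mp hK _ ?_ (K.sub_mem (h hm) hz))⟩
  have hdiff : (1 + ad R L v) m - (a + m) = ⁅v, m⁆ - a := by
    simp only [LinearMap.add_apply, Module.End.one_apply, ad_apply]
    abel
  rw [hdiff]
  exact sub_mem (lie_mem_left R L A v m hv) ha

lemma mapsTo_one_add_ad_iff {M K : LieSubalgebra R L} (hK : IsCompl A.toSubmodule K.toSubmodule)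
    {v : L} (hv : v ∈ A) : Set.MapsTo ⇑(1 + ad R L v) M K ↔
      ∀ m ∈ M, A.toSubmodule.projection K.toSubmodule hK m = ⁅m, v⁆ := by
  refine forall₂_congr fun m _ ↦ ?_
  rw [Submodule.projection_apply_eq_iff_sub_mem hK (lie_mem_right R L A m v hv), sub_eq_add_neg,
    lie_skew]
  rfl

variable (hA : ⁅A, A⁆ = ⊥)
include hA

noncomputable def projectionDerivation (K : LieSubalgebra R L)
    (hK : IsCompl A.toSubmodule K.toSubmodule) : LieDerivation R L A where
  toLinearMap := A.toSubmodule.projectionOnto K.toSubmodule hK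
  leibniz' x y := by
    ext
    set p := A.toSubmodule.projection K.toSubmodule hK
    have hp : ∀ z, p z ∈ A := Submodule.projection_apply_mem hK
    have hdecomp : ⁅x, y⁆ = (⁅x, p y⁆ - ⁅y, p x⁆) + ⁅x - p x, y - p y⁆ := by
      rw [sub_lie, lie_sub, lie_sub, (LieSubmodule.lie_eq_bot_iff A A).mp hA _ (hp x) _ (hp y),
        ← lie_skew (p x) y]
      abel
    change p ⁅x, y⁆ = ⁅x, p y⁆ - ⁅y, p x⁆
    rw [hdecomp, map_add, Submodule.projection_apply_of_mem_left hK
      (sub_mem (lie_mem_right R L A _ _ (hp y)) (lie_mem_right R L A _ _ (hp x))),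
      Submodule.projection_apply_of_mem_right hK
      (K.lie_mem (Submodule.sub_projection_mem hK x) (Submodule.sub_projection_mem hK y)),
      add_zero]

variable {M K : LieSubalgebra R L}
  (hM : IsCompl A.toSubmodule M.toSubmodule) (hK : IsCompl A.toSubmodule K.toSubmodule)

lemma coe_projectionDerivation_apply (x : L) :
    (projectionDerivation hA K hK x : L) = A.toSubmodule.projection K.toSubmodule hK x :=
  rfl

lemma projectionDerivation_sub_eq_inner_iff_forall_mem (v : A) :
    projectionDerivation hA K hK - projectionDerivation hA M hM = LieDerivation.inner R L A v ↔
      ∀ m ∈ M, A.toSubmodule.projection K.toSubmodule hK m = ⁅m, (v : L)⁆ := by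
  simp only [LieDerivation.ext_iff, LieDerivation.sub_apply, Subtype.ext_iff,
    LieSubmodule.coe_sub, coe_projectionDerivation_apply, LieDerivation.inner_apply_apply,
    LieSubmodule.coe_bracket]
  constructor
  · intro h m hm
    rw [← h, Submodule.projection_apply_of_mem_right hM hm, sub_zero]
  · intro h x
    set a := A.toSubmodule.projection M.toSubmodule hM x
    have ha : a ∈ A := Submodule.projection_apply_mem hM x
    calc A.toSubmodule.projection K.toSubmodule hK x - a
        _ = A.toSubmodule.projection K.toSubmodule hK (a + (x - a)) - a := by
          rw [add_sub_cancel]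
        _ = a + ⁅x - a, (v : L)⁆ - a := by
          rw [map_add, Submodule.projection_apply_of_mem_left hK ha,
            h _ (Submodule.sub_projection_mem hM x)]
        _ = ⁅x, (v : L)⁆ := by
          rw [sub_lie, (LieSubmodule.lie_eq_bot_iff A A).mp hA a ha v v.2]
          abel

lemma projectionDerivation_sub_eq_inner_iff (v : A) :
    projectionDerivation hA K hK - projectionDerivation hA M hM = LieDerivation.inner R L A v ↔
      (K : Set L) = ⇑(1 + ad R L (v : L)) '' M := by
  rw [projectionDerivation_sub_eq_inner_iff_forall_mem, ← mapsTo_one_add_ad_iff hK v.2]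
  exact ⟨fun h ↦ (image_one_add_ad_eq_of_mapsTo hM.codisjoint hK.disjoint v.2 h).symm,
    fun h ↦ h ▸ Set.mapsTo_image _ _⟩

lemma forall_mem_ker_projectionDerivation_sub_eq_zero_iff :
    (∀ x ∈ LieModule.ker R L A,
        (projectionDerivation hA K hK - projectionDerivation hA M hM) x = 0) ↔
      {z | z ∈ M ∧ ∀ a ∈ A, ⁅z, a⁆ = 0} = {z | z ∈ K ∧ ∀ a ∈ A, ⁅z, a⁆ = 0} := by
  simp only [LieSubmodule.mem_ker_iff_forall_lie_eq_zero, LieDerivation.sub_apply, sub_eq_zero,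
    Subtype.ext_iff, coe_projectionDerivation_apply]
  constructor
  · intro h
    ext z
    refine ⟨fun ⟨hz, hzC⟩ ↦ ⟨?_, hzC⟩, fun ⟨hz, hzC⟩ ↦ ⟨?_, hzC⟩⟩
    · exact (Submodule.projection_apply_eq_zero_iff hK).mp
        ((h z hzC).trans (Submodule.projection_apply_of_mem_right hM hz))
    · exact (Submodule.projection_apply_eq_zero_iff hM).mp
        ((h z hzC).symm.trans (Submodule.projection_apply_of_mem_right hK hz))
  · intro h x hx
    set a := A.toSubmodule.projection M.toSubmodule hM x
    have ha : a ∈ A := Submodule.projection_apply_mem hM x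
    have hxaC : ∀ b ∈ A, ⁅x - a, b⁆ = 0 := fun b hb ↦ by
      rw [sub_lie, hx b hb, (LieSubmodule.lie_eq_bot_iff A A).mp hA a ha b hb, sub_zero]
    have hxaK : x - a ∈ K := (h ▸ ⟨Submodule.sub_projection_mem hM x, hxaC⟩ :
      x - a ∈ {z | z ∈ K ∧ ∀ b ∈ A, ⁅z, b⁆ = 0}).1
    calc A.toSubmodule.projection K.toSubmodule hK x
        _ = A.toSubmodule.projection K.toSubmodule hK (a + (x - a)) := by rw [add_sub_cancel]
        _ = a := by
          rw [map_add, Submodule.projection_apply_of_mem_left hK ha,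
            Submodule.projection_apply_of_mem_right hK hxaK, add_zero]

end LieIdeal

/-- Two complements `M`, `K` to a minimal ideal `A` of a finite-dimensional solvable Lie
algebra `L` are conjugate under the group `I(L:A)` generated by the automorphisms
`id + ad a`, `a ∈ A`, if and only if `M ∩ C_L(A) = K ∩ C_L(A)`. -/
theorem complements_conjugate_iff_centralizer_intersections_eq (F : Type*) [Field F]
    (L : Type*) [LieRing L] [LieAlgebra F L] [FiniteDimensional F L]
    [LieAlgebra.IsSolvable L]
    (A : LieIdeal F L) (hA : IsAtom A) (M K : LieSubalgebra F L)
    (hM₁ : ∀ x : L, ∃ a ∈ A, ∃ m ∈ M, x = a + m)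
    (hM₂ : ∀ x : L, x ∈ A → x ∈ M → x = 0)
    (hK₁ : ∀ x : L, ∃ a ∈ A, ∃ m ∈ K, x = a + m)
    (hK₂ : ∀ x : L, x ∈ A → x ∈ K → x = 0) :
    (∃ l : List L, (∀ a ∈ l, a ∈ A) ∧
        (K : Set L) =
          ⇑((l.map (fun a => (1 : Module.End F L) + LieAlgebra.ad F L a)).prod) '' (M : Set L))
      ↔ {z : L | z ∈ M ∧ ∀ a ∈ A, ⁅z, a⁆ = 0} = {z : L | z ∈ K ∧ ∀ a ∈ A, ⁅z, a⁆ = 0} := by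
  have hA₀ : ⁅A, A⁆ = ⊥ := LieIdeal.lie_self_eq_bot_of_isAtom hA
  have hM : IsCompl A.toSubmodule M.toSubmodule := Submodule.isCompl_of_forall_exists_add hM₁ hM₂
  have hK : IsCompl A.toSubmodule K.toSubmodule := Submodule.isCompl_of_forall_exists_add hK₁ hK₂
  have : IsIrreducible F L A := LieSubmodule.isIrreducible_of_isAtom hA
  rw [LieIdeal.exists_list_iff_exists_mem hA₀,
    ← LieIdeal.forall_mem_ker_projectionDerivation_sub_eq_zero_iff hA₀ hM hK]
  constructor
  · rintro ⟨v, hv, hKv⟩ x hx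
    rw [(LieIdeal.projectionDerivation_sub_eq_inner_iff hA₀ hM hK ⟨v, hv⟩).mpr hKv,
      LieDerivation.inner_apply_apply]
    exact (LieModule.mem_ker F L A x).mp hx _
  · intro h
    obtain ⟨v, hv⟩ := LieDerivation.exists_eq_inner_of_forall_mem_ker _ h
    exact ⟨v, v.2, (LieIdeal.projectionDerivation_sub_eq_inner_iff hA₀ hM hK v).mp hv.symm⟩
end

section
/- Let L be a finite-dimensional solvable Lie algebra and A a minimal ideal of L. There is a bijection between the set of conjugacy classes under I(L:A) of complements to A in L, and the set of subalgebras B that are ideals of L, contained in C_L(A), and complement A inside C_L(A) (i.e. C_L(A) = A ⊕ B). -/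
/-!
A minimal ideal `A` of a solvable Lie algebra is abelian, so `C = C_L(A)` contains `A` and every
`1 + ad a` (`a ∈ A`) fixes `C` pointwise; hence `M ↦ M ∩ C` is constant on conjugacy classes, and
it sends complements of `A` to ideals complementing `A` in `C`. If `C = L` every complement lies
in `C` and the map is injective. Otherwise pick `k` in the last term of the derived series not
contained in `C`: minimality of `A` and Engel's theorem make `ad k` injective on `A`, while
`(ad k)^2 L ⊆ C`. Fitting's lemma gives `L = engel k + C`, so `engel k + B` is a complement
meeting `C` in `B`. Conversely, for a complement `M` the projection `π` onto `A` along `M` is a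
derivation; for `x ∈ A` with `[k, x] = π k`, the derivation `π + ad x` vanishes at `k`, so it
commutes with `ad k` and therefore kills `engel k`, i.e. `1 + ad x` maps `engel k + (M ∩ C)`
onto `M`.
-/

section

open LieAlgebra LieModule LieSubalgebra

theorem Module.End.isNilpotent_of_forall_exists_pow_apply_eq_zero {F V : Type*} [Field F]
    [AddCommGroup V] [Module F V] [FiniteDimensional F V] (f : Module.End F V)
    (h : ∀ v, ∃ n : ℕ, (f ^ n) v = 0) : IsNilpotent f := by
  refine ⟨Module.finrank F V, LinearMap.ext fun v => ?_⟩
  have hv : v ∈ f.maxGenEigenspace 0 := (f.mem_maxGenEigenspace 0 v).mpr (by simpa using h v)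
  rw [maxGenEigenspace_eq_genEigenspace_finrank, mem_genEigenspace_nat] at hv
  simpa using hv

theorem Submodule.image_eq_of_mapsTo_of_sub_mem {R E : Type*} [Ring R] [AddCommGroup E]
    [Module R E] {p q q' : Submodule R E} (hq' : Codisjoint p q') (hq : Disjoint p q)
    {φ : E → E} (hφ : ∀ z, φ z - z ∈ p) (h : Set.MapsTo φ q' q) : φ '' q' = q := by
  refine subset_antisymm (Set.image_subset_iff.mpr h) fun m hm => ?_
  obtain ⟨a, ha, z, hz, rfl⟩ := Submodule.mem_sup.mp (hq'.eq_top ▸ mem_top : m ∈ p ⊔ q')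
  refine ⟨z, hz, sub_eq_zero.mp (Submodule.disjoint_def.mp hq _ ?_ (sub_mem (h hz) hm))⟩
  rw [add_comm, ← sub_sub]
  exact sub_mem (hφ z) ha

variable {F : Type*} [Field F] {L : Type*} [LieRing L] [LieAlgebra F L]

theorem LieAlgebra.exists_derivedSeries_not_le_succ_le [IsSolvable L] {I : LieIdeal F L}
    (hI : I ≠ ⊤) : ∃ m, ¬ derivedSeries F L m ≤ I ∧ derivedSeries F L (m + 1) ≤ I := by
  classical
  have hex : ∃ n, derivedSeries F L n ≤ I := by
    obtain ⟨n, hn⟩ := IsSolvable.solvable (R := F) (L := L)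
    exact ⟨n, hn ▸ bot_le⟩
  obtain ⟨m, hm⟩ : ∃ m, Nat.find hex = m + 1 := by
    refine Nat.exists_eq_succ_of_ne_zero fun h0 => hI (top_le_iff.mp ?_)
    simpa [h0] using Nat.find_spec hex
  exact ⟨m, Nat.find_min hex (by omega), hm ▸ Nat.find_spec hex⟩

def LieSubalgebra.addIdeal (H : LieSubalgebra F L) (I : LieIdeal F L) : LieSubalgebra F L where
  toSubmodule := H.toSubmodule ⊔ I.toSubmodule
  lie_mem' := by
    intro _ _ hx hy
    obtain ⟨h, hh, i, hi, rfl⟩ := Submodule.mem_sup.mp hx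
    obtain ⟨h', hh', i', hi', rfl⟩ := Submodule.mem_sup.mp hy
    rw [add_lie, lie_add, lie_add, add_assoc]
    exact Submodule.add_mem_sup (H.lie_mem hh hh') <| add_mem (I.lie_mem hi') <|
      add_mem (lie_mem_left F L I _ _ hi) (I.lie_mem hi')

theorem LieSubalgebra.codisjoint_engel_of_lie_lie_mem [FiniteDimensional F L] {k : L}
    {p : Submodule F L} (hk : ∀ y, ⁅k, ⁅k, y⁆⁆ ∈ p) : Codisjoint (engel F k).toSubmodule p := by
  obtain ⟨n, hn⟩ :=
    Filter.eventually_atTop.mp (LinearMap.eventually_codisjoint_ker_pow_range_pow (ad F L k))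
  refine (hn (n + 2) (by omega)).mono (fun y hy => (mem_engel_iff F k y).mpr ⟨n + 2, hy⟩) ?_
  rintro _ ⟨y, rfl⟩
  rw [pow_succ', pow_succ', Module.End.mul_apply, Module.End.mul_apply]
  exact hk _

namespace LieIdeal

variable {A : LieIdeal F L}

theorem isLieAbelian_of_isAtom [IsSolvable L] (hA : IsAtom A) :
    IsLieAbelian A := by
  have hle : derivedAbelianOfIdeal A ≤ A := by
    unfold derivedAbelianOfIdeal
    split
    · exact bot_le
    · exact derivedSeriesOfIdeal_le_self _ _
  have hne : derivedAbelianOfIdeal A ≠ ⊥ := (abelian_of_solvable_ideal_eq_bot_iff A).not.mpr hA.1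
  rw [← (hA.le_iff.mp hle).resolve_left hne]
  exact abelian_derivedAbelianOfIdeal A

theorem ad_pow_mem {a : L} (ha : a ∈ A) (k : L) (n : ℕ) : (ad F L k ^ n) a ∈ A := by
  have := ((toEnd F L A k ^ n) ⟨a, ha⟩).2
  rwa [LieSubmodule.coe_toEnd_pow] at this

/-- `LieModule.ker F L A` is the centraliser `C_L(A)`. -/
theorem mem_ker_iff {x : L} : x ∈ LieModule.ker F L A ↔ ∀ a ∈ A, ⁅x, a⁆ = 0 := by
  simp [LieModule.mem_ker, Subtype.ext_iff]

theorem one_add_ad_apply_of_mem_ker {x z : L} (hx : x ∈ A) (hz : z ∈ LieModule.ker F L A) :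
    (1 + ad F L x) z = z := by
  rw [LinearMap.add_apply, Module.End.one_apply, ad_apply, ← lie_skew, mem_ker_iff.mp hz x hx,
    neg_zero, add_zero]

theorem lie_mem_engel {k a : L} (hk : ∀ y, ⁅k, ⁅k, y⁆⁆ ∈ LieModule.ker F L A) (ha : a ∈ A)
    (hae : a ∈ engel F k) (y : L) : ⁅y, a⁆ ∈ engel F k := by
  obtain ⟨n, hn⟩ := (mem_engel_iff F k a).mp hae
  refine (mem_engel_iff F k _).mpr ⟨n + 1, ?_⟩
  rw [ad_pow_lie]
  refine Finset.sum_eq_zero ?_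
  rintro ⟨i, j⟩ hij
  rw [Finset.HasAntidiagonal.mem_antidiagonal] at hij
  dsimp only
  obtain hj | hj := le_or_gt n j
  · rw [Module.End.pow_map_zero_of_le hj hn, lie_zero, smul_zero]
  · obtain ⟨i, rfl⟩ : ∃ i', i = i' + 2 := ⟨i - 2, by omega⟩
    have hi : (ad F L k ^ (i + 2)) y ∈ LieModule.ker F L A := by
      rw [pow_succ', pow_succ', Module.End.mul_apply, Module.End.mul_apply]
      exact hk _
    rw [mem_ker_iff.mp hi _ (ad_pow_mem ha k j), smul_zero]

section Abelian

variable [IsLieAbelian A]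

theorem lie_eq_zero_of_mem {a b : L} (ha : a ∈ A) (hb : b ∈ A) : ⁅a, b⁆ = 0 := by
  have h : ⁅a, b⁆ ∈ ⁅A, A⁆ := LieSubmodule.lie_mem_lie ha hb
  rwa [(LieSubmodule.lie_abelian_iff_lie_self_eq_bot A).mp ‹_›, LieSubmodule.mem_bot] at h

theorem le_ker : A ≤ LieModule.ker F L A :=
  fun _ ha => mem_ker_iff.mpr fun _ hb => lie_eq_zero_of_mem ha hb

theorem one_add_ad_mul_one_add_ad {a b : L} (ha : a ∈ A) (hb : b ∈ A) :
    (1 + ad F L a) * (1 + ad F L b) = 1 + ad F L (a + b) := by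
  ext x
  have h : ⁅a, ⁅b, x⁆⁆ = 0 := lie_eq_zero_of_mem ha (lie_mem_left F L A b x hb)
  simp only [Module.End.mul_apply, LinearMap.add_apply, Module.End.one_apply, ad_apply, map_add,
    h]
  abel

theorem prod_map_one_add_ad {l : List L} (hl : ∀ a ∈ l, a ∈ A) :
    (l.map fun a => (1 : Module.End F L) + ad F L a).prod = 1 + ad F L l.sum := by
  induction l with
  | nil => simp
  | cons a l ih =>
    rw [List.forall_mem_cons] at hl
    rw [List.map_cons, List.prod_cons, ih hl.2, List.sum_cons,
      one_add_ad_mul_one_add_ad hl.1 (list_sum_mem hl.2)]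

theorem image_one_add_ad_inter_ker {x : L} (hx : x ∈ A) (S : Set L) :
    ⇑(1 + ad F L x) '' S ∩ LieModule.ker F L A = S ∩ LieModule.ker F L A := by
  ext z
  constructor
  · rintro ⟨⟨s, hs, rfl⟩, hz⟩
    have hsC : s ∈ LieModule.ker F L A := by
      have := sub_mem hz (le_ker (lie_mem_left F L A x s hx))
      rwa [LinearMap.add_apply, Module.End.one_apply, ad_apply, add_sub_cancel_right] at this
    rw [one_add_ad_apply_of_mem_ker hx hsC]
    exact ⟨hs, hsC⟩
  · rintro ⟨hs, hz⟩
    exact ⟨⟨z, hs, one_add_ad_apply_of_mem_ker hx hz⟩, hz⟩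

theorem projection_lie {M : LieSubalgebra F L} (hM : IsCompl A.toSubmodule M.toSubmodule)
    (u v : L) :
    A.toSubmodule.projection M.toSubmodule hM ⁅u, v⁆ =
      ⁅A.toSubmodule.projection M.toSubmodule hM u, v⁆ +
        ⁅u, A.toSubmodule.projection M.toSubmodule hM v⁆ := by
  set π := A.toSubmodule.projection M.toSubmodule hM
  have hπ : ∀ w, π w ∈ A := Submodule.projection_apply_mem hM
  have hsum : ⁅π u, v⁆ + ⁅u, π v⁆ ∈ A :=
    add_mem (lie_mem_left F L A _ _ (hπ u)) (lie_mem_right F L A _ _ (hπ v))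
  have hdiff : ⁅u, v⁆ - (⁅π u, v⁆ + ⁅u, π v⁆) = ⁅u - π u, v - π v⁆ := by
    simp only [sub_lie, lie_sub, lie_eq_zero_of_mem (hπ u) (hπ v)]
    abel
  have hdiff_mem : ⁅u, v⁆ - (⁅π u, v⁆ + ⁅u, π v⁆) ∈ M := hdiff ▸
    M.lie_mem (Submodule.sub_projection_mem hM u) (Submodule.sub_projection_mem hM v)
  rw [← sub_add_cancel ⁅u, v⁆ (⁅π u, v⁆ + ⁅u, π v⁆), map_add,
    Submodule.projection_apply_of_mem_right hM hdiff_mem,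
    Submodule.projection_apply_of_mem_left hM hsum, zero_add]

end Abelian

section Complement

variable (A) {M : LieSubalgebra F L}

theorem isCompl_toSubmodule_iff :
    IsCompl A.toSubmodule M.toSubmodule ↔
      (∀ x : L, ∃ a ∈ A, ∃ m ∈ M, x = a + m) ∧ (∀ x : L, x ∈ A → x ∈ M → x = 0) := by
  rw [_root_.isCompl_iff, and_comm, codisjoint_iff, Submodule.disjoint_def,
    Submodule.eq_top_iff']
  simp only [Submodule.mem_sup, LieSubmodule.mem_toSubmodule, mem_toSubmodule, eq_comm]

def complementIdeal (M : LieSubalgebra F L) (hM : Codisjoint A.toSubmodule M.toSubmodule) :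
    LieIdeal F L where
  toSubmodule := M.toSubmodule ⊓ (LieModule.ker F L A).toSubmodule
  lie_mem := by
    rintro y x ⟨hxM, hxC⟩
    obtain ⟨a, ha, m, hm, rfl⟩ :=
      Submodule.mem_sup.mp (hM.eq_top ▸ Submodule.mem_top : y ∈ A.toSubmodule ⊔ _)
    have hax : ⁅a, x⁆ = 0 := by rw [← lie_skew, mem_ker_iff.mp hxC a ha, neg_zero]
    rw [add_lie, hax, zero_add]
    exact ⟨M.lie_mem hm hxM, (LieModule.ker F L A).lie_mem hxC⟩

theorem coe_complementIdeal (hM : Codisjoint A.toSubmodule M.toSubmodule) :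
    (A.complementIdeal M hM : Set L) = (M : Set L) ∩ LieModule.ker F L A :=
  rfl

theorem sup_complementIdeal [IsLieAbelian A] (hM : Codisjoint A.toSubmodule M.toSubmodule) :
    A ⊔ A.complementIdeal M hM = LieModule.ker F L A := by
  refine le_antisymm (sup_le le_ker fun _ hx => hx.2) fun x hx => ?_
  obtain ⟨a, ha, m, hm, rfl⟩ :=
    Submodule.mem_sup.mp (hM.eq_top ▸ Submodule.mem_top : x ∈ A.toSubmodule ⊔ _)
  have hmC : m ∈ LieModule.ker F L A := by simpa using sub_mem hx (le_ker ha)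
  exact (LieSubmodule.mem_sup _ _ _).mpr ⟨a, ha, m, ⟨hm, hmC⟩, rfl⟩

theorem disjoint_complementIdeal (hM : IsCompl A.toSubmodule M.toSubmodule) :
    Disjoint A (A.complementIdeal M hM.codisjoint) := by
  rw [← LieSubmodule.disjoint_toSubmodule]
  exact hM.disjoint.mono_right inf_le_left

theorem sup_eq_ker_and_disjoint_iff [IsLieAbelian A] {B : LieIdeal F L} :
    A ⊔ B = LieModule.ker F L A ∧ Disjoint A B ↔
      (∀ b ∈ B, ∀ a ∈ A, ⁅b, a⁆ = 0) ∧
      (∀ x : L, (∀ a ∈ A, ⁅x, a⁆ = 0) → ∃ a ∈ A, ∃ b ∈ B, x = a + b) ∧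
      (∀ x : L, x ∈ A → x ∈ B → x = 0) := by
  rw [le_antisymm_iff, sup_le_iff, and_iff_right le_ker, ← LieSubmodule.disjoint_toSubmodule,
    Submodule.disjoint_def]
  simp only [SetLike.le_def, LieSubmodule.mem_sup, ← mem_ker_iff, LieSubmodule.mem_toSubmodule,
    eq_comm, and_assoc]

end Complement

theorem le_ker_of_isNilpotent (hA : IsAtom A) (K : LieIdeal F L) [LieModule.IsNilpotent K A] :
    K ≤ LieModule.ker F L A := by
  have : Nontrivial A := (LieSubmodule.nontrivial_iff_ne_bot F L L).mpr hA.1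
  have := nontrivial_max_triv_of_isNilpotent F K A
  obtain ⟨⟨v, hv⟩, hv0⟩ := exists_ne (0 : maxTrivSubmodule F K A)
  have hvK : (v : L) ∈ LieModule.ker F L K := mem_ker_iff.mpr fun k hk => by
    rw [← lie_skew, neg_eq_zero]
    exact congrArg Subtype.val ((mem_maxTrivSubmodule F K A v).mp hv ⟨k, hk⟩)
  have hne : A ⊓ LieModule.ker F L K ≠ ⊥ := fun h => hv0 <| by
    have : (v : L) ∈ A ⊓ LieModule.ker F L K := ⟨v.2, hvK⟩
    rw [h, LieSubmodule.mem_bot] at this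
    ext
    exact this
  have hAK : A ≤ LieModule.ker F L K :=
    inf_eq_left.mp ((hA.le_iff.mp inf_le_left).resolve_left hne)
  exact fun k hk => mem_ker_iff.mpr fun a ha => by
    rw [← lie_skew, mem_ker_iff.mp (hAK ha) k hk, neg_zero]

section KeyElement

variable [FiniteDimensional F L]

theorem exists_mem_not_mem_engel (hA : IsAtom A) {K : LieIdeal F L}
    (hK : ¬ K ≤ LieModule.ker F L A) : ∃ k ∈ K, ∃ a ∈ A, a ∉ engel F k := by
  by_contra! h
  have : LieModule.IsNilpotent K A := by
    refine (LieModule.isNilpotent_iff_forall' (R := F)).mpr fun k =>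
      Module.End.isNilpotent_of_forall_exists_pow_apply_eq_zero _ fun a => ?_
    obtain ⟨n, hn⟩ := (mem_engel_iff F (k : L) (a : L)).mp (h k k.2 a a.2)
    refine ⟨n, Subtype.ext ?_⟩
    rw [LieSubmodule.coe_zero, ← hn]
    clear hn
    induction n with
    | zero => rfl
    | succ n ih => rw [pow_succ', Module.End.mul_apply, pow_succ', Module.End.mul_apply, ← ih]; rfl
  exact hK (le_ker_of_isNilpotent hA K)

theorem exists_forall_mem_engel_eq_zero [IsSolvable L] (hA : IsAtom A)
    (hC : LieModule.ker F L A ≠ ⊤) :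
    ∃ k : L, (∀ a ∈ A, a ∈ engel F k → a = 0) ∧ ∀ y, ⁅k, ⁅k, y⁆⁆ ∈ LieModule.ker F L A := by
  obtain ⟨m, hm, hm'⟩ := exists_derivedSeries_not_le_succ_le hC
  obtain ⟨k, hk, a₀, ha₀, ha₀'⟩ := exists_mem_not_mem_engel hA hm
  have hsq : ∀ y, ⁅k, ⁅k, y⁆⁆ ∈ LieModule.ker F L A := fun y => hm' <| by
    rw [derivedSeries_def, derivedSeriesOfIdeal_succ, ← derivedSeries_def]
    exact LieSubmodule.lie_mem_lie hk (lie_mem_left F L _ k y hk)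
  let U : LieIdeal F L :=
    { toSubmodule := A.toSubmodule ⊓ (engel F k).toSubmodule
      lie_mem := by
        rintro y x ⟨haA, hae⟩
        exact ⟨A.lie_mem haA, lie_mem_engel hsq haA hae y⟩ }
  have hU : U = ⊥ := (hA.le_iff.mp (show U ≤ A from fun _ ha => ha.1)).resolve_right
    fun h => ha₀' (h ▸ ha₀ : a₀ ∈ U).2
  refine ⟨k, fun a ha hae => ?_, hsq⟩
  have : a ∈ U := ⟨ha, hae⟩
  rwa [hU, LieSubmodule.mem_bot] at this

end KeyElement

section ReferenceComplement

theorem exists_lie_eq_of_forall_mem_engel [FiniteDimensional F L] {k : L}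
    (hk : ∀ a ∈ A, a ∈ engel F k → a = 0) {a : L} (ha : a ∈ A) : ∃ b ∈ A, ⁅k, b⁆ = a := by
  have hinj : Function.Injective (toEnd F L A k) := by
    rw [← LinearMap.ker_eq_bot, LinearMap.ker_eq_bot']
    exact fun b hb => Subtype.ext <| hk b b.2 <|
      (mem_engel_iff F k b).mpr ⟨1, by simpa using congrArg Subtype.val hb⟩
  obtain ⟨b, hb⟩ := LinearMap.injective_iff_surjective.mp hinj ⟨a, ha⟩
  exact ⟨b, b.2, congrArg Subtype.val hb⟩

theorem apply_eq_zero_of_mem_engel {k : L} (hk : ∀ a ∈ A, a ∈ engel F k → a = 0)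
    {D : Module.End F L} (hD : Commute D (ad F L k)) (hDA : ∀ y, D y ∈ A) {z : L}
    (hz : z ∈ engel F k) : D z = 0 := by
  obtain ⟨n, hn⟩ := (mem_engel_iff F k z).mp hz
  refine hk _ (hDA z) ((mem_engel_iff F k _).mpr ⟨n, ?_⟩)
  rw [← Module.End.mul_apply, ← (hD.pow_right n).eq, Module.End.mul_apply, hn, map_zero]

theorem exists_forall_mem_engel_add_lie_mem [FiniteDimensional F L] [IsLieAbelian A] {k : L}
    (hk : ∀ a ∈ A, a ∈ engel F k → a = 0) {M : LieSubalgebra F L}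
    (hM : IsCompl A.toSubmodule M.toSubmodule) :
    ∃ x ∈ A, ∀ z ∈ engel F k, z + ⁅x, z⁆ ∈ M := by
  set π := A.toSubmodule.projection M.toSubmodule hM
  obtain ⟨x, hx, hkx⟩ :=
    exists_lie_eq_of_forall_mem_engel hk (Submodule.projection_apply_mem hM k)
  -- a derivation with values in `A` vanishing at `k`
  set δ := π + ad F L x
  have hδ_lie : ∀ u v, δ ⁅u, v⁆ = ⁅δ u, v⁆ + ⁅u, δ v⁆ := fun u v => by
    simp only [δ, π, LinearMap.add_apply, ad_apply, projection_lie, leibniz_lie x u v, add_lie,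
      lie_add]
    abel
  have hδk : δ k = 0 := by
    rw [LinearMap.add_apply, ad_apply, ← lie_skew, hkx, add_neg_cancel]
  have hδ : Commute δ (ad F L k) := LinearMap.ext fun y => by
    rw [Module.End.mul_apply, Module.End.mul_apply, ad_apply, ad_apply, hδ_lie, hδk, zero_lie,
      zero_add]
  refine ⟨x, hx, fun z hz => ?_⟩
  have hδz : π z + ⁅x, z⁆ = 0 := apply_eq_zero_of_mem_engel hk hδ
    (fun y => add_mem (Submodule.projection_apply_mem hM y) (lie_mem_left F L A x y hx)) hz
  rw [eq_neg_of_add_eq_zero_right hδz, ← sub_eq_add_neg]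
  exact Submodule.sub_projection_mem hM z

theorem mem_of_mem_engel_of_mem_sup {k : L} (hk : ∀ a ∈ A, a ∈ engel F k → a = 0)
    {B : LieIdeal F L} (hAB : Disjoint A B) {z : L} (hz : z ∈ engel F k) (hzAB : z ∈ A ⊔ B) :
    z ∈ B := by
  obtain ⟨a, ha, b, hb, rfl⟩ := (LieSubmodule.mem_sup _ _ _).mp hzAB
  obtain ⟨n, hn⟩ := (mem_engel_iff F k _).mp hz
  rw [map_add, add_eq_zero_iff_eq_neg] at hn
  have hna : (ad F L k ^ n) a = 0 :=
    Submodule.disjoint_def.mp (LieSubmodule.disjoint_toSubmodule.mpr hAB) _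
      (ad_pow_mem ha k n) (hn ▸ neg_mem (ad_pow_mem hb k n))
  rw [hk a ha ((mem_engel_iff F k a).mpr ⟨n, hna⟩), zero_add]
  exact hb

theorem isCompl_engel_addIdeal {k : L} (hk : ∀ a ∈ A, a ∈ engel F k → a = 0)
    {B : LieIdeal F L} (hAB : Disjoint A B)
    (hcod : Codisjoint (engel F k).toSubmodule (A ⊔ B).toSubmodule) :
    IsCompl A.toSubmodule ((engel F k).addIdeal B).toSubmodule := by
  refine ⟨Submodule.disjoint_def.mpr fun z hzA hz => ?_, ?_⟩
  · obtain ⟨e, he, b, hb, rfl⟩ := Submodule.mem_sup.mp hz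
    have heB : e ∈ B := mem_of_mem_engel_of_mem_sup hk hAB he <|
      (add_mem_cancel_right (le_sup_right (a := A) hb)).mp (le_sup_left (b := B) hzA)
    exact Submodule.disjoint_def.mp (LieSubmodule.disjoint_toSubmodule.mpr hAB) _ hzA
      (add_mem heB hb)
  · rw [codisjoint_iff] at hcod ⊢
    rw [← hcod, LieSubmodule.sup_toSubmodule]
    exact sup_left_comm _ _ _

theorem coe_engel_addIdeal_inter {k : L} (hk : ∀ a ∈ A, a ∈ engel F k → a = 0)
    {B : LieIdeal F L} (hAB : Disjoint A B) :
    ((engel F k).addIdeal B : Set L) ∩ (A ⊔ B : LieIdeal F L) = B := by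
  ext z
  refine ⟨fun ⟨hz, hzAB⟩ => ?_, fun hz =>
    ⟨Submodule.mem_sup_right hz, (le_sup_right : B ≤ A ⊔ B) hz⟩⟩
  obtain ⟨e, he, b, hb, rfl⟩ := Submodule.mem_sup.mp hz
  exact add_mem (mem_of_mem_engel_of_mem_sup hk hAB he
    ((add_mem_cancel_right (le_sup_right (a := A) hb)).mp hzAB)) hb

theorem exists_image_engel_addIdeal_complementIdeal_eq [FiniteDimensional F L] [IsLieAbelian A]
    {k : L} (hk : ∀ a ∈ A, a ∈ engel F k → a = 0) (hsq : ∀ y, ⁅k, ⁅k, y⁆⁆ ∈ LieModule.ker F L A)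
    {M : LieSubalgebra F L} (hM : IsCompl A.toSubmodule M.toSubmodule) :
    ∃ x ∈ A, ⇑(1 + ad F L x) '' ((engel F k).addIdeal (A.complementIdeal M hM.codisjoint) : Set L)
      = M := by
  have hAB := A.sup_complementIdeal hM.codisjoint
  obtain ⟨x, hx, hxM⟩ := exists_forall_mem_engel_add_lie_mem hk hM
  have hcompl := isCompl_engel_addIdeal hk (A.disjoint_complementIdeal hM)
    (codisjoint_engel_of_lie_lie_mem fun y => by rw [hAB]; exact hsq y)
  refine ⟨x, hx, Submodule.image_eq_of_mapsTo_of_sub_mem hcompl.codisjoint hM.disjoint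
    (fun z => ?_) fun z hz => ?_⟩
  · simpa using lie_mem_left F L A x z hx
  · obtain ⟨e, he, b, hb, rfl⟩ := Submodule.mem_sup.mp hz
    rw [map_add, one_add_ad_apply_of_mem_ker hx hb.2]
    simpa using M.add_mem (hxM e he) hb.1

end ReferenceComplement

section Main

variable [FiniteDimensional F L] [IsSolvable L]

theorem exists_isCompl_inter_ker_eq (hA : IsAtom A) {B : LieIdeal F L}
    (hAB : A ⊔ B = LieModule.ker F L A) (hdis : Disjoint A B) :
    ∃ M : LieSubalgebra F L, IsCompl A.toSubmodule M.toSubmodule ∧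
      (M : Set L) ∩ LieModule.ker F L A = B := by
  by_cases hC : LieModule.ker F L A = ⊤
  · refine ⟨B, ⟨LieSubmodule.disjoint_toSubmodule.mpr hdis, ?_⟩, by simp [hC]⟩
    rw [hC] at hAB
    rw [codisjoint_iff, LieIdeal.toLieSubalgebra_toSubmodule, ← LieSubmodule.sup_toSubmodule, hAB,
      LieSubmodule.top_toSubmodule]
  · obtain ⟨k, hk, hsq⟩ := exists_forall_mem_engel_eq_zero hA hC
    rw [← hAB] at hsq ⊢
    exact ⟨_, isCompl_engel_addIdeal hk hdis (codisjoint_engel_of_lie_lie_mem hsq),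
      coe_engel_addIdeal_inter hk hdis⟩

theorem exists_eq_image_of_inter_ker_eq (hA : IsAtom A) {M K : LieSubalgebra F L}
    (hM : IsCompl A.toSubmodule M.toSubmodule) (hK : IsCompl A.toSubmodule K.toSubmodule)
    (h : (M : Set L) ∩ LieModule.ker F L A = (K : Set L) ∩ LieModule.ker F L A) :
    ∃ x ∈ A, (K : Set L) = ⇑(1 + ad F L x) '' M := by
  have := isLieAbelian_of_isAtom hA
  by_cases hC : LieModule.ker F L A = ⊤
  · refine ⟨0, zero_mem A, ?_⟩
    simp_all
  · obtain ⟨k, hk, hsq⟩ := exists_forall_mem_engel_eq_zero hA hC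
    obtain ⟨x, hx, hxM⟩ := exists_image_engel_addIdeal_complementIdeal_eq hk hsq hM
    obtain ⟨y, hy, hyK⟩ := exists_image_engel_addIdeal_complementIdeal_eq hk hsq hK
    have hB : A.complementIdeal M hM.codisjoint = A.complementIdeal K hK.codisjoint :=
      SetLike.coe_injective h
    rw [hB] at hxM
    refine ⟨y - x, sub_mem hy hx, ?_⟩
    rw [← hxM, ← hyK, ← Set.image_comp, ← Module.End.coe_mul,
      one_add_ad_mul_one_add_ad (sub_mem hy hx) hx, sub_add_cancel]

end Main

end LieIdeal

end

/-- (Stitzinger) Let `A` be a minimal ideal of a finite-dimensional solvable Lie algebra `L`.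
There is a bijection between the conjugacy classes, under the group `I(L:A)` generated by
`id + ad a` (`a ∈ A`), of complements to `A` in `L`, and the ideals of `L` which complement
`A` inside the centraliser `C_L(A)`.  We express this as a surjection from complements to
such ideals whose fibres are exactly the conjugacy classes. -/
theorem bijection_conjClasses_complements (F : Type*) [Field F]
    (L : Type*) [LieRing L] [LieAlgebra F L] [FiniteDimensional F L]
    [LieAlgebra.IsSolvable L]
    (A : LieIdeal F L) (hA : IsAtom A) :
    ∃ f : {M : LieSubalgebra F L //
            (∀ x : L, ∃ a ∈ A, ∃ m ∈ M, x = a + m) ∧ (∀ x : L, x ∈ A → x ∈ M → x = 0)} →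
          {B : LieIdeal F L //
            (∀ b ∈ B, ∀ a ∈ A, ⁅b, a⁆ = 0) ∧
            (∀ x : L, (∀ a ∈ A, ⁅x, a⁆ = 0) → ∃ a ∈ A, ∃ b ∈ B, x = a + b) ∧
            (∀ x : L, x ∈ A → x ∈ B → x = 0)},
      Function.Surjective f ∧
      ∀ M K, f M = f K ↔
        ∃ l : List L, (∀ a ∈ l, a ∈ A) ∧
          ((K : LieSubalgebra F L) : Set L) =
            ⇑((l.map (fun a => (1 : Module.End F L) + LieAlgebra.ad F L a)).prod) ''
              ((M : LieSubalgebra F L) : Set L) := by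
  have := LieIdeal.isLieAbelian_of_isAtom hA
  refine ⟨fun M => ⟨A.complementIdeal M.1 (A.isCompl_toSubmodule_iff.mpr M.2).codisjoint,
    A.sup_eq_ker_and_disjoint_iff.mp ⟨A.sup_complementIdeal _,
      A.disjoint_complementIdeal (A.isCompl_toSubmodule_iff.mpr M.2)⟩⟩, ?_, ?_⟩
  · rintro ⟨B, hB⟩
    obtain ⟨hAB, hdis⟩ := A.sup_eq_ker_and_disjoint_iff.mpr hB
    obtain ⟨M, hM, hMB⟩ := LieIdeal.exists_isCompl_inter_ker_eq hA hAB hdis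
    exact ⟨⟨M, A.isCompl_toSubmodule_iff.mp hM⟩, Subtype.ext (SetLike.coe_injective hMB)⟩
  · rintro ⟨M, hM⟩ ⟨K, hK⟩
    simp only [Subtype.mk.injEq, ← SetLike.coe_set_eq, LieIdeal.coe_complementIdeal]
    refine ⟨fun h => ?_, fun ⟨l, hl, hKl⟩ => ?_⟩
    · obtain ⟨x, hx, hKx⟩ := LieIdeal.exists_eq_image_of_inter_ker_eq hA
        (A.isCompl_toSubmodule_iff.mpr hM) (A.isCompl_toSubmodule_iff.mpr hK) h
      exact ⟨[x], by simpa using hx, by simpa using hKx⟩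
    · rw [LieIdeal.prod_map_one_add_ad hl] at hKl
      rw [hKl, LieIdeal.image_one_add_ad_inter_ker (list_sum_mem hl)]
end

section
/- Let L be a finite-dimensional solvable Lie algebra with chief series 0 = L₀ < L₁ < … < Lₙ = L, and let M be a maximal subalgebra of L. Then there exists an index k, 0 ≤ k ≤ n−1, such that L_k ⊆ M, L_{k+1} ⊄ M, L = M + L_{k+1}, and M ∩ L_{k+1} = L_k (i.e. M complements the chief factor L_{k+1}/L_k). -/
/-!
The chief factors `C (k+1) / C k` of a solvable Lie algebra are abelian: `C k ⊔ ⁅C (k+1), C (k+1)⁆`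
lies between them, and if it were all of `C (k+1)`, iterating would give
`C (k+1) ≤ C k ⊔ D^m (C (k+1)) = C k` once the derived series vanishes.
Pick `k` with `C k ⊆ M` but `C (k+1) ⊄ M`. By maximality `M + C (k+1) = L`, and then, because the
chief factor is abelian, `M ∩ C (k+1)` is an ideal of `L` squeezed between `C k` and `C (k+1)`;
it cannot be `C (k+1)`, so it is `C k`.
-/

theorem Nat.exists_lt_and_not_succ_of_zero_of_not {p : ℕ → Prop} {n : ℕ} (h0 : p 0) (hn : ¬ p n) :
    ∃ k < n, p k ∧ ¬ p (k + 1) := by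
  induction n with
  | zero => exact absurd h0 hn
  | succ n ih =>
    by_cases hpn : p n
    · exact ⟨n, lt_add_one n, hpn, hn⟩
    · obtain ⟨k, hk, hpk⟩ := ih hpn
      exact ⟨k, by omega, hpk⟩

section

open LieAlgebra

variable {R L : Type*} [CommRing R] [LieRing L] [LieAlgebra R L]

namespace LieIdeal

theorem le_sup_derivedSeriesOfIdeal_of_le_sup_lie {I J : LieIdeal R L} (h : J ≤ I ⊔ ⁅J, J⁆)
    (m : ℕ) : J ≤ I ⊔ derivedSeriesOfIdeal R L m J := by
  induction m with
  | zero => exact le_sup_right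
  | succ m ih =>
    have hD : derivedSeriesOfIdeal R L m J ≤ I ⊔ derivedSeriesOfIdeal R L (m + 1) J :=
      calc derivedSeriesOfIdeal R L m J
          ≤ derivedSeriesOfIdeal R L (0 + m) (I + derivedSeriesOfIdeal R L 1 J) := by
            rw [zero_add]; exact derivedSeriesOfIdeal_mono h m
        _ ≤ I + derivedSeriesOfIdeal R L m (derivedSeriesOfIdeal R L 1 J) :=
            derivedSeriesOfIdeal_add_le_add I _ 0 m
        _ = I ⊔ derivedSeriesOfIdeal R L (m + 1) J := by rw [← derivedSeriesOfIdeal_add]; rfl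
    exact ih.trans (sup_le le_sup_left hD)

theorem lie_le_of_covBy [IsSolvable L] {I J : LieIdeal R L} (h : I ⋖ J) : ⁅J, J⁆ ≤ I := by
  rcases h.eq_or_eq le_sup_left (sup_le h.le (LieSubmodule.lie_le_left J J)) with hI | hJ
  · exact le_sup_right.trans hI.le
  · obtain ⟨m, hm⟩ := IsSolvable.solvable R L
    have hbot : derivedSeriesOfIdeal R L m J = ⊥ :=
      eq_bot_iff.2 ((derivedSeriesOfIdeal_mono le_top m).trans hm.le)
    have hJI := le_sup_derivedSeriesOfIdeal_of_le_sup_lie hJ.ge m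
    rw [hbot, sup_bot_eq] at hJI
    exact absurd hJI h.lt.not_ge

end LieIdeal

namespace LieSubalgebra

def supLieIdeal (K : LieSubalgebra R L) (I : LieIdeal R L) : LieSubalgebra R L where
  toSubmodule := K.toSubmodule ⊔ I
  lie_mem' {x y} hx hy := by
    obtain ⟨m, hm, a, ha, rfl⟩ := Submodule.mem_sup.1 hx
    obtain ⟨m', hm', a', ha', rfl⟩ := Submodule.mem_sup.1 hy
    have hexpand : ⁅m + a, m' + a'⁆ = ⁅m, m'⁆ + (⁅m + a, a'⁆ + ⁅a, m'⁆) := by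
      simp only [add_lie, lie_add]; abel
    rw [hexpand]
    exact Submodule.add_mem_sup (K.lie_mem hm hm')
      (I.toSubmodule.add_mem (I.lie_mem ha') (lie_mem_left R L I _ _ ha))

theorem toSubmodule_sup_eq_top_of_isCoatom {M : LieSubalgebra R L} (hM : IsCoatom M)
    {I : LieIdeal R L} (hIM : ¬ (I : Submodule R L) ≤ M.toSubmodule) :
    M.toSubmodule ⊔ I = ⊤ := by
  have hlt : M < M.supLieIdeal I := lt_of_le_not_ge (fun _ hx ↦ Submodule.mem_sup_left hx)
    fun h ↦ hIM fun _ hx ↦ h (Submodule.mem_sup_right hx)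
  exact congrArg toSubmodule (hM.2 _ hlt)

/-- Bracketing `K ∩ I` with the `K`-part of an element stays in `K ∩ I`; with the `I`-part it
lands in `⁅I, I⁆ ⊆ K ∩ I`. -/
def infLieIdeal (K : LieSubalgebra R L) (I : LieIdeal R L) (hsup : K.toSubmodule ⊔ I = ⊤)
    (hab : (⁅I, I⁆ : LieIdeal R L).toSubmodule ≤ K.toSubmodule) : LieIdeal R L where
  toSubmodule := K.toSubmodule ⊓ I
  lie_mem {x z} hz := by
    obtain ⟨m, hm, a, ha, rfl⟩ := Submodule.mem_sup.1 (hsup.ge (Submodule.mem_top (x := x)))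
    have haz : ⁅a, z⁆ ∈ ⁅I, I⁆ := LieSubmodule.lie_mem_lie ha hz.2
    rw [add_lie]
    exact ⟨K.add_mem (K.lie_mem hm hz.1) (hab haz), I.toSubmodule.add_mem
      (I.lie_mem hz.2) (LieSubmodule.lie_le_left I I haz)⟩

theorem toSubmodule_inf_eq_of_isCoatom_of_covBy [IsSolvable L] {M : LieSubalgebra R L}
    (hM : IsCoatom M) {I J : LieIdeal R L} (hIJ : I ⋖ J) (hIM : (I : Submodule R L) ≤ M.toSubmodule)
    (hJM : ¬ (J : Submodule R L) ≤ M.toSubmodule) :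
    M.toSubmodule ⊓ J = I := by
  have hab : (⁅J, J⁆ : LieIdeal R L).toSubmodule ≤ M.toSubmodule :=
    ((LieSubmodule.toSubmodule_le_toSubmodule _ _).2 (LieIdeal.lie_le_of_covBy hIJ)).trans hIM
  let N := M.infLieIdeal J (toSubmodule_sup_eq_top_of_isCoatom hM hJM) hab
  have hIN : I ≤ N := fun _ hx ↦ ⟨hIM hx, hIJ.le hx⟩
  rcases hIJ.eq_or_eq hIN fun _ hx ↦ hx.2 with hN | hN
  · exact congrArg LieSubmodule.toSubmodule hN
  · exact absurd (fun x hx ↦ (hN ▸ hx : x ∈ N).1) hJM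

end LieSubalgebra

end

theorem maximal_subalgebra_complements_chief_factor_general (F : Type*) [Field F]
    (L : Type*) [LieRing L] [LieAlgebra F L]
    [LieAlgebra.IsSolvable L]
    (n : ℕ) (C : ℕ → LieIdeal F L)
    (h0 : C 0 = ⊥) (hn : C n = ⊤)
    (hlt : ∀ k < n, C k < C (k + 1))
    (hchief : ∀ k < n, ∀ I : LieIdeal F L, C k ≤ I → I ≤ C (k + 1) → I = C k ∨ I = C (k + 1))
    (M : LieSubalgebra F L) (hM : IsCoatom M) :
    ∃ k < n, ((C k : Set L) ⊆ (M : Set L)) ∧ ¬ ((C (k + 1) : Set L) ⊆ (M : Set L)) ∧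
      (∀ x : L, ∃ m ∈ M, ∃ a ∈ C (k + 1), x = m + a) ∧
      {z : L | z ∈ M ∧ z ∈ C (k + 1)} = (C k : Set L) := by
  have hC0 : (C 0 : Set L) ⊆ M := by simp [h0]
  have hCn : ¬ (C n : Set L) ⊆ M := fun h ↦ hM.1 (eq_top_iff.2 fun x _ ↦ h (by simp [hn]))
  obtain ⟨k, hkn, hCk, hCk1⟩ :=
    Nat.exists_lt_and_not_succ_of_zero_of_not (p := fun j ↦ (C j : Set L) ⊆ M) hC0 hCn
  have hcov : C k ⋖ C (k + 1) := covBy_iff_lt_and_eq_or_eq.2 ⟨hlt k hkn, hchief k hkn⟩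
  have hsup := LieSubalgebra.toSubmodule_sup_eq_top_of_isCoatom hM hCk1
  have hinf := LieSubalgebra.toSubmodule_inf_eq_of_isCoatom_of_covBy hM hcov hCk hCk1
  refine ⟨k, hkn, hCk, hCk1, fun x ↦ ?_, congrArg SetLike.coe hinf⟩
  obtain ⟨m, hm, a, ha, hx⟩ := Submodule.mem_sup.1 (hsup.ge (Submodule.mem_top (x := x)))
  exact ⟨m, hm, a, ha, hx.symm⟩

/-- Let `0 = L₀ < L₁ < … < Lₙ = L` be a chief series of a finite-dimensional solvable Lie
algebra `L` and `M` a maximal subalgebra.  Then there is `k < n` with `L_k ⊆ M`,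
`L_{k+1} ⊄ M`, `L = M + L_{k+1}` and `M ∩ L_{k+1} = L_k`, i.e. `M` complements the chief
factor `L_{k+1}/L_k`. -/
theorem maximal_subalgebra_complements_chief_factor (F : Type*) [Field F]
    (L : Type*) [LieRing L] [LieAlgebra F L] [FiniteDimensional F L]
    [LieAlgebra.IsSolvable L]
    (n : ℕ) (C : ℕ → LieIdeal F L)
    (h0 : C 0 = ⊥) (hn : C n = ⊤)
    (hlt : ∀ k < n, C k < C (k + 1))
    (hchief : ∀ k < n, ∀ I : LieIdeal F L, C k ≤ I → I ≤ C (k + 1) → I = C k ∨ I = C (k + 1))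
    (M : LieSubalgebra F L) (hM : IsCoatom M) :
    ∃ k < n, ((C k : Set L) ⊆ (M : Set L)) ∧ ¬ ((C (k + 1) : Set L) ⊆ (M : Set L)) ∧
      (∀ x : L, ∃ m ∈ M, ∃ a ∈ C (k + 1), x = m + a) ∧
      {z : L | z ∈ M ∧ z ∈ C (k + 1)} = (C k : Set L) :=
  maximal_subalgebra_complements_chief_factor_general F L n C h0 hn hlt hchief M hM
end

section
/- Let L be a finite-dimensional solvable Lie algebra (over a field of characteristic 0, or of characteristic p with L² nilpotent of class < p). Let A/B be a chief factor of L complemented by a maximal subalgebra M (so L = A + M and A ∩ M = B). If A ⊄ M then B = A ∩ M_L and (A + M_L)/M_L is a minimal abelian ideal of L/M_L isomorphic as L-module to A/B. -/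
/-- The core of a subalgebra: the largest ideal of `L` contained in it. -/
noncomputable def lieCore (F : Type*) [Field F] (L : Type*) [LieRing L] [LieAlgebra F L]
    (M : LieSubalgebra F L) : LieIdeal F L :=
  sSup {I : LieIdeal F L | (I : Set L) ⊆ (M : Set L)}

/-!
Since `B ⊆ M`, the ideal `B` lies in the core `C = M_L`, and `A ∩ C ⊆ A ∩ M = B`; hence
`A ∩ C = B`. The lattice of ideals is modular, so `[B, A] = [A ∩ C, A]` is isomorphic to
`[C, A + C]`: the covering `B ⋖ A` becomes `C ⋖ A + C`, and the second isomorphism theorem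
`A/(A ∩ C) ≅ (A + C)/C` is `L`-equivariant. Abelianness comes from solvability: a chief factor
`A/B` with `[A, A] ⊄ B` would satisfy `A = B + [A, A]`, hence `A = B + A⁽ⁿ⁾` for every term of
the derived series of `A`, which reaches `0`.
-/

theorem le_lieCore_iff {F L : Type*} [Field F] [LieRing L] [LieAlgebra F L]
    {M : LieSubalgebra F L} {I : LieIdeal F L} :
    I ≤ lieCore F L M ↔ (I : Set L) ⊆ M := by
  refine ⟨fun h => Set.Subset.trans h fun x hx => ?_, fun h => le_sSup h⟩
  change x ∈ (lieCore F L M).toSubmodule at hx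
  rw [lieCore, LieSubmodule.sSup_toSubmodule] at hx
  refine (sSup_le ?_ : _ ≤ M.toSubmodule) hx
  rintro _ ⟨J, hJ, rfl⟩
  exact hJ

theorem coe_lieCore_subset {F L : Type*} [Field F] [LieRing L] [LieAlgebra F L]
    (M : LieSubalgebra F L) : (lieCore F L M : Set L) ⊆ M :=
  le_lieCore_iff.1 le_rfl

namespace LieIdeal

variable {R L : Type*} [CommRing R] [LieRing L] [LieAlgebra R L]

theorem lie_sup_le_sup_lie (B D : LieIdeal R L) : ⁅B ⊔ D, B ⊔ D⁆ ≤ B ⊔ ⁅D, D⁆ := by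
  rw [LieSubmodule.sup_lie, LieSubmodule.lie_sup, LieSubmodule.lie_sup]
  exact sup_le
    (sup_le (le_sup_of_le_left (LieSubmodule.lie_le_left _ _))
      (le_sup_of_le_left (LieSubmodule.lie_le_left _ _)))
    (sup_le (le_sup_of_le_left (LieSubmodule.lie_le_right _ _)) le_sup_right)

theorem lie_sup_le_of_lie_le {A C : LieIdeal R L} (h : ⁅A, A⁆ ≤ C) : ⁅A ⊔ C, A ⊔ C⁆ ≤ C := by
  rw [sup_comm]
  exact (lie_sup_le_sup_lie C A).trans (sup_le le_rfl h)

theorem le_sup_derivedSeriesOfIdeal {A B : LieIdeal R L} (h : A ≤ B ⊔ ⁅A, A⁆) (n : ℕ) :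
    A ≤ B ⊔ LieAlgebra.derivedSeriesOfIdeal R L n A := by
  induction n with
  | zero => exact le_sup_right
  | succ n ih =>
    set D := LieAlgebra.derivedSeriesOfIdeal R L n A
    calc A ≤ B ⊔ ⁅A, A⁆ := h
      _ ≤ B ⊔ ⁅B ⊔ D, B ⊔ D⁆ := sup_le_sup_left (LieSubmodule.mono_lie ih ih) B
      _ ≤ B ⊔ (B ⊔ ⁅D, D⁆) := sup_le_sup_left (lie_sup_le_sup_lie B D) B
      _ = B ⊔ LieAlgebra.derivedSeriesOfIdeal R L (n + 1) A := by
        rw [← sup_assoc, sup_idem, LieAlgebra.derivedSeriesOfIdeal_succ]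

theorem le_of_le_sup_lie [LieAlgebra.IsSolvable L] {A B : LieIdeal R L} (h : A ≤ B ⊔ ⁅A, A⁆) :
    A ≤ B := by
  obtain ⟨k, hk⟩ := LieAlgebra.IsSolvable.solvable (R := R) (L := L)
  have hAk : LieAlgebra.derivedSeriesOfIdeal R L k A = ⊥ := by
    rw [eq_bot_iff, ← hk, LieAlgebra.derivedSeries_def]
    exact LieAlgebra.derivedSeriesOfIdeal_mono le_top k
  simpa [hAk] using le_sup_derivedSeriesOfIdeal h k

theorem lie_le_of_covBy_s10 [LieAlgebra.IsSolvable L] {A B : LieIdeal R L} (h : B ⋖ A) :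
    ⁅A, A⁆ ≤ B := by
  rcases h.eq_or_eq le_sup_left (sup_le h.le (LieSubmodule.lie_le_left A A)) with hB | hA
  · exact le_sup_right.trans hB.le
  · exact absurd (le_of_le_sup_lie hA.ge) h.lt.not_ge

end LieIdeal

namespace LieSubmodule

variable {R L M : Type*} [CommRing R] [LieRing L] [LieAlgebra R L] [AddCommGroup M] [Module R M]
  [LieRingModule L M] [LieModule R L M]

noncomputable def quotientInfEquivSupQuotient (N P : LieSubmodule R L M) :
    (N ⧸ comap N.incl (N ⊓ P)) ≃ₗ⁅R,L⁆ ((N ⊔ P : LieSubmodule R L M) ⧸ comap (N ⊔ P).incl P) :=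
  -- The carriers of `N ⊔ P`, `N ⊓ P` and of the comaps are definitionally those of the
  -- corresponding submodules, so the linear second isomorphism theorem applies verbatim.
  let e : (N ⧸ comap N.incl (N ⊓ P)) ≃ₗ[R] ((N ⊔ P : LieSubmodule R L M) ⧸ comap (N ⊔ P).incl P) :=
    LinearMap.quotientInfEquivSupQuotient N.toSubmodule P.toSubmodule
  have he (n : N) : e (Quotient.mk' _ n) = Quotient.mk' _ (inclusion le_sup_left n) :=
    LinearMap.quotientInfEquivSupQuotient_apply_mk _ _ n
  { e with
    map_lie' := by
      rintro x ⟨n⟩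
      exact (he ⁅x, n⁆).trans (by rw [(inclusion _).map_lie, (Quotient.mk' _).map_lie, ← he]; rfl) }

end LieSubmodule

theorem chief_factor_complemented_general (F : Type*) [Field F]
    (L : Type*) [LieRing L] [LieAlgebra F L]
    [LieAlgebra.IsSolvable L]
    (A B : LieIdeal F L) (hBA : B < A)
    (hchief : ∀ I : LieIdeal F L, B ≤ I → I ≤ A → I = B ∨ I = A)
    (M : LieSubalgebra F L)
    (hint : {z : L | z ∈ A ∧ z ∈ M} = (B : Set L)) :
    (B : Set L) = {z : L | z ∈ A ∧ z ∈ lieCore F L M} ∧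
    lieCore F L M < A ⊔ lieCore F L M ∧
    (∀ I : LieIdeal F L, lieCore F L M ≤ I → I ≤ A ⊔ lieCore F L M →
      I = lieCore F L M ∨ I = A ⊔ lieCore F L M) ∧
    (∀ x ∈ A ⊔ lieCore F L M, ∀ y ∈ A ⊔ lieCore F L M, ⁅x, y⁆ ∈ lieCore F L M) ∧
    ∃ e : ((A ⊔ lieCore F L M : LieIdeal F L) ⧸
            LieSubmodule.comap
              (LieSubmodule.incl ((A ⊔ lieCore F L M : LieIdeal F L) : LieSubmodule F L L))
              (lieCore F L M : LieSubmodule F L L)) ≃ₗ[F]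
          ((A : LieIdeal F L) ⧸
            LieSubmodule.comap (LieSubmodule.incl ((A : LieIdeal F L) : LieSubmodule F L L))
              (B : LieSubmodule F L L)),
      ∀ (x : L) v, e ⁅x, v⁆ = ⁅x, e v⁆ := by
  set C := lieCore F L M
  have hmem (z : L) : z ∈ A ∧ z ∈ M ↔ z ∈ B := Set.ext_iff.1 hint z
  have hBC : B ≤ C := le_lieCore_iff.2 fun b hb => ((hmem b).2 hb).2
  have hACB : A ⊓ C = B :=
    le_antisymm (fun z hz => (hmem z).1 ⟨hz.1, coe_lieCore_subset M hz.2⟩) (le_inf hBA.le hBC)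
  have hcovAB : B ⋖ A := covBy_iff_lt_and_eq_or_eq.2 ⟨hBA, hchief⟩
  have hcovCA : C ⋖ A ⊔ C := covBy_sup_of_inf_covBy_left (hACB ▸ hcovAB)
  have hAC : ⁅A ⊔ C, A ⊔ C⁆ ≤ C :=
    LieIdeal.lie_sup_le_of_lie_le ((LieIdeal.lie_le_of_covBy_s10 hcovAB).trans hBC)
  subst hACB
  let e := (LieSubmodule.quotientInfEquivSupQuotient A C).symm
  exact ⟨rfl, hcovCA.lt, fun I => hcovCA.eq_or_eq, fun x hx y hy => hAC (LieSubmodule.lie_mem_lie hx hy),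
    e.toLinearEquiv, e.map_lie⟩

/-- Let `L` be a finite-dimensional solvable Lie algebra (over a field of characteristic `0`,
or of characteristic `p` with `L²` nilpotent of class `< p`), and let `A/B` be a chief factor
of `L` complemented by a maximal subalgebra `M` with `A ⊄ M`.  Then `B = A ∩ M_L` and
`(A + M_L)/M_L` is a minimal abelian ideal of `L/M_L`, isomorphic as an `L`-module to
`A/B`. -/
theorem chief_factor_complemented (F : Type*) [Field F]
    (L : Type*) [LieRing L] [LieAlgebra F L] [FiniteDimensional F L]
    [LieAlgebra.IsSolvable L]
    (hchar : CharZero F ∨ ∃ p : ℕ, p.Prime ∧ CharP F p ∧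
      LieModule.lowerCentralSeries F
        (⁅(⊤ : LieIdeal F L), (⊤ : LieIdeal F L)⁆ : LieIdeal F L)
        (⁅(⊤ : LieIdeal F L), (⊤ : LieIdeal F L)⁆ : LieIdeal F L) (p - 1) = ⊥)
    (A B : LieIdeal F L) (hBA : B < A)
    (hchief : ∀ I : LieIdeal F L, B ≤ I → I ≤ A → I = B ∨ I = A)
    (M : LieSubalgebra F L) (hM : IsCoatom M)
    (hsum : ∀ x : L, ∃ a ∈ A, ∃ m ∈ M, x = a + m)
    (hint : {z : L | z ∈ A ∧ z ∈ M} = (B : Set L))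
    (hAM : ¬ ((A : Set L) ⊆ (M : Set L))) :
    (B : Set L) = {z : L | z ∈ A ∧ z ∈ lieCore F L M} ∧
    lieCore F L M < A ⊔ lieCore F L M ∧
    (∀ I : LieIdeal F L, lieCore F L M ≤ I → I ≤ A ⊔ lieCore F L M →
      I = lieCore F L M ∨ I = A ⊔ lieCore F L M) ∧
    (∀ x ∈ A ⊔ lieCore F L M, ∀ y ∈ A ⊔ lieCore F L M, ⁅x, y⁆ ∈ lieCore F L M) ∧
    ∃ e : ((A ⊔ lieCore F L M : LieIdeal F L) ⧸
            LieSubmodule.comap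
              (LieSubmodule.incl ((A ⊔ lieCore F L M : LieIdeal F L) : LieSubmodule F L L))
              (lieCore F L M : LieSubmodule F L L)) ≃ₗ[F]
          ((A : LieIdeal F L) ⧸
            LieSubmodule.comap (LieSubmodule.incl ((A : LieIdeal F L) : LieSubmodule F L L))
              (B : LieSubmodule F L L)),
      ∀ (x : L) v, e ⁅x, v⁆ = ⁅x, e v⁆ :=
  chief_factor_complemented_general F L A B hBA hchief M hint
end

section
/- Let L be a finite-dimensional solvable Lie algebra and let M, K be maximal subalgebras with K_L ⊄ M_L and K ≠ K_L. Let A/K_L be a minimal ideal of L/K_L, where A is an ideal of L containing K_L. Then A ∩ K = K_L, A = (A ∩ M) + K_L, and (A ∩ M)/(K_L ∩ M) is isomorphic to A/K_L; moreover A ∩ M is an ideal of M and M = (A ∩ M) + (M ∩ K). -/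
open LieAlgebra

namespace Submodule

variable {R V : Type*} [Ring R] [AddCommGroup V] [Module R V]

theorem nonempty_quotient_inf_equiv_quotient {p q r : Submodule R V} (hqp : q ≤ p)
    (h : p ⊓ r ⊔ q = p) :
    Nonempty ((↥(p ⊓ r) ⧸ comap (p ⊓ r).subtype (q ⊓ r)) ≃ₗ[R] ↥p ⧸ comap p.subtype q) := by
  have e := LinearMap.quotientInfEquivSupQuotient (p ⊓ r) q
  have hinf : p ⊓ r ⊓ q = q ⊓ r := by
    rw [inf_right_comm, inf_eq_right.mpr hqp]
  rw [← comap_inf, hinf, h] at e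
  exact ⟨e⟩

end Submodule

section LieIdeal

variable {R L : Type*} [CommRing R] [LieRing L] [LieAlgebra R L]

def LieSubalgebra.supLieIdeal_s16 (S : LieSubalgebra R L) (I : LieIdeal R L) :
    LieSubalgebra R L where
  toSubmodule := I.toSubmodule ⊔ S.toSubmodule
  lie_mem' {x y} hx hy := by
    obtain ⟨a, ha, k, hk, rfl⟩ := Submodule.mem_sup.mp hx
    obtain ⟨a', ha', k', hk', rfl⟩ := Submodule.mem_sup.mp hy
    simp only [add_lie, lie_add]
    refine add_mem (add_mem ?_ ?_) (add_mem ?_ (Submodule.mem_sup_right (S.lie_mem hk hk')))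
    all_goals apply Submodule.mem_sup_left
    exacts [lie_mem_left R L I _ _ ha, lie_mem_right R L I _ _ ha', lie_mem_left R L I _ _ ha]

theorem LieSubalgebra.toSubmodule_sup_eq_top_of_isCoatom_s16 {S : LieSubalgebra R L}
    (hS : IsCoatom S) {I : LieIdeal R L} (hIS : ¬ I.toSubmodule ≤ S.toSubmodule) :
    I.toSubmodule ⊔ S.toSubmodule = ⊤ := by
  have hlt : S < S.supLieIdeal_s16 I :=
    lt_of_le_not_ge (fun _ hx => Submodule.mem_sup_right hx)
      fun h => hIS (le_sup_left.trans (show (S.supLieIdeal_s16 I).toSubmodule ≤ _ from h))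
  exact congrArg LieSubalgebra.toSubmodule (hS.2 _ hlt)

theorem LieIdeal.lie_sup_self_le (I B : LieIdeal R L) : ⁅I ⊔ B, I ⊔ B⁆ ≤ ⁅I, I⁆ ⊔ B := by
  rw [LieSubmodule.sup_lie, LieSubmodule.lie_sup, LieSubmodule.lie_sup]
  exact sup_le (sup_le le_sup_left (le_sup_of_le_right (LieSubmodule.lie_le_right _ _)))
    (le_sup_of_le_right (sup_le (LieSubmodule.lie_le_left _ _) (LieSubmodule.lie_le_left _ _)))

theorem LieIdeal.derivedSeriesOfIdeal_sup_eq {A B : LieIdeal R L} (h : ⁅A, A⁆ ⊔ B = A) (n : ℕ) :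
    derivedSeriesOfIdeal R L n A ⊔ B = A := by
  have hBA : B ≤ A := le_sup_right.trans h.le
  induction n with
  | zero => exact sup_eq_left.mpr hBA
  | succ n ih =>
    refine le_antisymm (sup_le (derivedSeriesOfIdeal_le_self A _) hBA) ?_
    calc A = ⁅A, A⁆ ⊔ B := h.symm
      _ = ⁅derivedSeriesOfIdeal R L n A ⊔ B, derivedSeriesOfIdeal R L n A ⊔ B⁆ ⊔ B := by rw [ih]
      _ ≤ derivedSeriesOfIdeal R L (n + 1) A ⊔ B := by
        rw [derivedSeriesOfIdeal_succ]
        exact sup_le (lie_sup_self_le _ _) le_sup_right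

theorem LieIdeal.lie_le_of_minimal [IsSolvable L] {A B : LieIdeal R L} (hBA : B < A)
    (hmin : ∀ I : LieIdeal R L, B ≤ I → I ≤ A → I = B ∨ I = A) : ⁅A, A⁆ ≤ B := by
  rcases hmin (⁅A, A⁆ ⊔ B) le_sup_right (sup_le (LieSubmodule.lie_le_left A A) hBA.le)
    with h | h
  · exact le_sup_left.trans h.le
  · obtain ⟨k, hk⟩ := IsSolvable.solvable R L
    have hDk : derivedSeriesOfIdeal R L k A = ⊥ :=
      le_bot_iff.mp (hk ▸ derivedSeriesOfIdeal_mono le_top k)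
    have := derivedSeriesOfIdeal_sup_eq h k
    rw [hDk, bot_sup_eq] at this
    exact absurd this hBA.ne

end LieIdeal

section lieCore

variable {F L : Type*} [Field F] [LieRing L] [LieAlgebra F L]

theorem le_lieCore_iff_s16 {S : LieSubalgebra F L} {I : LieIdeal F L} :
    I ≤ lieCore F L S ↔ I.toSubmodule ≤ S.toSubmodule := by
  refine ⟨fun h => ((LieSubmodule.toSubmodule_le_toSubmodule _ _).mpr h).trans ?_,
    fun h => le_sSup h⟩
  rw [lieCore, LieSubmodule.sSup_toSubmodule]
  exact sSup_le fun _ ⟨_, hJ, hp⟩ => hp ▸ hJ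

theorem lieCore_le (S : LieSubalgebra F L) : (lieCore F L S).toSubmodule ≤ S.toSubmodule :=
  le_lieCore_iff_s16.mp le_rfl

theorem inf_le_lieCore {A : LieIdeal F L} {K : LieSubalgebra F L}
    (hAK : A.toSubmodule ⊔ K.toSubmodule = ⊤) (hlie : ∀ a ∈ A, ∀ b ∈ A, ⁅a, b⁆ ∈ K) :
    A.toSubmodule ⊓ K.toSubmodule ≤ (lieCore F L K).toSubmodule := by
  -- `A ∩ K` is an ideal of `L`, because `L = A + K` and `⁅A, A ∩ K⁆ ⊆ A ∩ K`.
  let J : LieIdeal F L :=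
    { toSubmodule := A.toSubmodule ⊓ K.toSubmodule
      lie_mem := fun {x m} hm => by
        obtain ⟨a, ha, k, hk, rfl⟩ := Submodule.mem_sup.mp (hAK ▸ Submodule.mem_top : x ∈ _)
        rw [add_lie]
        exact ⟨add_mem (A.lie_mem hm.1) (A.lie_mem hm.1),
          add_mem (hlie a ha m hm.1) (K.lie_mem hk hm.2)⟩ }
  exact (LieSubmodule.toSubmodule_le_toSubmodule J _).mpr (le_lieCore_iff_s16.mpr inf_le_right)

end lieCore

theorem structure_of_nonconjugate_maximal_intersection_general (F : Type*) [Field F]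
    (L : Type*) [LieRing L] [LieAlgebra F L]
    [LieAlgebra.IsSolvable L]
    (M K : LieSubalgebra F L) (hM : IsCoatom M) (hK : IsCoatom K)
    (hcore : ¬ lieCore F L K ≤ lieCore F L M)
    (A : LieIdeal F L) (hKA : lieCore F L K < A)
    (hmin : ∀ I : LieIdeal F L, lieCore F L K ≤ I → I ≤ A → I = lieCore F L K ∨ I = A) :
    {z : L | z ∈ A ∧ z ∈ K} = ((lieCore F L K : LieIdeal F L) : Set L) ∧
    (∀ x ∈ A, ∃ y : L, (y ∈ A ∧ y ∈ M) ∧ ∃ z ∈ lieCore F L K, x = y + z) ∧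
    (∃ e : ((↥(A.toSubmodule ⊓ M.toSubmodule)) ⧸
              Submodule.comap (A.toSubmodule ⊓ M.toSubmodule).subtype
                ((lieCore F L K).toSubmodule ⊓ M.toSubmodule)) ≃ₗ[F]
           ((↥A.toSubmodule) ⧸
              Submodule.comap A.toSubmodule.subtype (lieCore F L K).toSubmodule), True) ∧
    (∀ m ∈ M, ∀ x : L, x ∈ A → x ∈ M → (⁅m, x⁆ ∈ A ∧ ⁅m, x⁆ ∈ M)) ∧
    (∀ m ∈ M, ∃ y : L, (y ∈ A ∧ y ∈ M) ∧ ∃ z : L, (z ∈ M ∧ z ∈ K) ∧ m = y + z) := by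
  set B := lieCore F L K
  have hBK : B.toSubmodule ≤ K.toSubmodule := lieCore_le K
  have hBA : B.toSubmodule ≤ A.toSubmodule := hKA.le
  have hAK : ¬ A.toSubmodule ≤ K.toSubmodule := fun h => hKA.not_ge (le_lieCore_iff_s16.mpr h)
  have hBM : ¬ B.toSubmodule ≤ M.toSubmodule := fun h => hcore (le_lieCore_iff_s16.mpr h)
  have hAK_top := LieSubalgebra.toSubmodule_sup_eq_top_of_isCoatom_s16 hK hAK
  have hBM_top := LieSubalgebra.toSubmodule_sup_eq_top_of_isCoatom_s16 hM hBM
  have hAA : ⁅A, A⁆ ≤ B := LieIdeal.lie_le_of_minimal hKA hmin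
  have hAKB : A.toSubmodule ⊓ K.toSubmodule = B.toSubmodule :=
    le_antisymm (inf_le_lieCore hAK_top fun a ha b hb => hBK (hAA (LieSubmodule.lie_mem_lie ha hb)))
      (le_inf hBA hBK)
  have hA : A.toSubmodule ⊓ M.toSubmodule ⊔ B.toSubmodule = A.toSubmodule := by
    rw [sup_comm, inf_comm, ← sup_inf_assoc_of_le _ hBA, hBM_top, top_inf_eq]
  have hAM_K : A.toSubmodule ⊓ M.toSubmodule ⊔ K.toSubmodule = ⊤ := by
    calc _ = A.toSubmodule ⊓ M.toSubmodule ⊔ B.toSubmodule ⊔ K.toSubmodule := by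
          rw [sup_assoc, sup_eq_right.mpr hBK]
      _ = ⊤ := by rw [hA, hAK_top]
  have hM' : A.toSubmodule ⊓ M.toSubmodule ⊔ M.toSubmodule ⊓ K.toSubmodule = M.toSubmodule := by
    rw [inf_comm M.toSubmodule, ← sup_inf_assoc_of_le _ inf_le_right, hAM_K, top_inf_eq]
  refine ⟨Set.ext fun z => SetLike.ext_iff.mp hAKB z, fun x hx => ?_,
    ⟨(Submodule.nonempty_quotient_inf_equiv_quotient hBA hA).some, trivial⟩,
    fun m hm x hxA hxM => ⟨A.lie_mem hxA, M.lie_mem hm hxM⟩, fun m hm => ?_⟩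
  · obtain ⟨y, hy, z, hz, rfl⟩ := Submodule.mem_sup.mp (hA.ge hx)
    exact ⟨y, hy, z, hz, rfl⟩
  · obtain ⟨y, hy, z, hz, rfl⟩ := Submodule.mem_sup.mp (hM'.ge hm)
    exact ⟨y, hy, z, hz, rfl⟩

/-- Let `M`, `K` be maximal subalgebras of a finite-dimensional solvable Lie algebra `L`
with `K_L ⊄ M_L` and `K ≠ K_L`, and let `A/K_L` be a minimal ideal of `L/K_L`.  Then
`A ∩ K = K_L`, `A = (A ∩ M) + K_L`, `(A ∩ M)/(K_L ∩ M) ≅ A/K_L`; moreover `A ∩ M` is an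
ideal of `M` and `M = (A ∩ M) + (M ∩ K)`. -/
theorem structure_of_nonconjugate_maximal_intersection (F : Type*) [Field F]
    (L : Type*) [LieRing L] [LieAlgebra F L] [FiniteDimensional F L]
    [LieAlgebra.IsSolvable L]
    (M K : LieSubalgebra F L) (hM : IsCoatom M) (hK : IsCoatom K)
    (hcore : ¬ lieCore F L K ≤ lieCore F L M)
    (hKne : (K : Set L) ≠ ((lieCore F L K : LieIdeal F L) : Set L))
    (A : LieIdeal F L) (hKA : lieCore F L K < A)
    (hmin : ∀ I : LieIdeal F L, lieCore F L K ≤ I → I ≤ A → I = lieCore F L K ∨ I = A) :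
    {z : L | z ∈ A ∧ z ∈ K} = ((lieCore F L K : LieIdeal F L) : Set L) ∧
    (∀ x ∈ A, ∃ y : L, (y ∈ A ∧ y ∈ M) ∧ ∃ z ∈ lieCore F L K, x = y + z) ∧
    (∃ e : ((↥(A.toSubmodule ⊓ M.toSubmodule)) ⧸
              Submodule.comap (A.toSubmodule ⊓ M.toSubmodule).subtype
                ((lieCore F L K).toSubmodule ⊓ M.toSubmodule)) ≃ₗ[F]
           ((↥A.toSubmodule) ⧸
              Submodule.comap A.toSubmodule.subtype (lieCore F L K).toSubmodule), True) ∧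
    (∀ m ∈ M, ∀ x : L, x ∈ A → x ∈ M → (⁅m, x⁆ ∈ A ∧ ⁅m, x⁆ ∈ M)) ∧
    (∀ m ∈ M, ∃ y : L, (y ∈ A ∧ y ∈ M) ∧ ∃ z : L, (z ∈ M ∧ z ∈ K) ∧ m = y + z) :=
  structure_of_nonconjugate_maximal_intersection_general F L M K hM hK hcore A hKA hmin
end
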